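/- Let f : ℝ³ → ℂ³ be a function whose Fourier transform f̂ is supported in the closed unit ball B₁(0) with ‖f̂‖_{L²} = M₀ < ∞. For λ > 1 define v_λ via v̂_λ(ξ) = i ξ × f̂(ξ − λe₃)/|ξ|. Then the Fourier support of v_λ is contained in the cone {ξ : angle(ξ, e₃) ≤ arcsin(1/λ)}, and ‖v_λ‖_{Ḣ^{1/2}} ≤ C λ^{1/2} ‖f̂‖_{L²} for a universal constant C. -/

import Mathlib

open MeasureTheory InnerProductGeometry

noncomputable section

abbrev E3 := EuclideanSpace ℝ (Fin 3)

def e3 : E3 := EuclideanSpace.single 2 1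

def vhat (Fh : E3 → Fin 3 → ℂ) (lam : ℝ) (ξ : E3) : Fin 3 → ℂ :=
  (Complex.I * ((‖ξ‖ : ℂ))⁻¹) •
    crossProduct (fun j => ((ξ j : ℝ) : ℂ)) (Fh (ξ - lam • e3))

/-!
The Fourier support of `v_λ` lies in the unit ball around `λe₃`, and every point `ξ` of that ball
satisfies `λ²⟪ξ, e₃⟫² ≥ (λ² - 1)‖ξ‖²`, which is the cone condition `sin ∠(ξ, e₃) ≤ 1/λ`. For the
`Ḣ^{1/2}` bound, `|ξ × f̂| ≤ 2|ξ||f̂|` in the sup norm, so `|v̂_λ(ξ)| ≤ 2|f̂(ξ - λe₃)|`, while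
`|ξ| ≤ λ + 1 ≤ 2λ` on the support; integrating and translating gives `‖v_λ‖²_{Ḣ^{1/2}} ≤ 8λ M₀²`.
-/

open Matrix

theorem norm_cross_le {R : Type*} [NormedCommRing R] (a b : Fin 3 → R) :
    ‖a ⨯₃ b‖ ≤ 2 * ‖a‖ * ‖b‖ := by
  have hterm (i j k l : Fin 3) : ‖a i * b j - a k * b l‖ ≤ 2 * ‖a‖ * ‖b‖ :=
    calc ‖a i * b j - a k * b l‖ ≤ ‖a i‖ * ‖b j‖ + ‖a k‖ * ‖b l‖ :=
          (norm_sub_le _ _).trans (add_le_add (norm_mul_le _ _) (norm_mul_le _ _))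
      _ ≤ ‖a‖ * ‖b‖ + ‖a‖ * ‖b‖ := by
          gcongr <;> first | exact norm_le_pi_norm a _ | exact norm_le_pi_norm b _
      _ = 2 * ‖a‖ * ‖b‖ := by ring
  refine (pi_norm_le_iff_of_nonneg (by positivity)).2 fun i => ?_
  rw [cross_apply]
  fin_cases i
  exacts [hterm 1 2 2 1, hterm 2 0 0 2, hterm 0 1 1 0]

theorem norm_ofReal_comp_le {ι : Type*} [Fintype ι] (x : EuclideanSpace ℝ ι) :
    ‖fun i => (x i : ℂ)‖ ≤ ‖x‖ :=
  (pi_norm_le_iff_of_nonneg (norm_nonneg x)).2 fun i => by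
    simpa only [Complex.norm_real] using PiLp.norm_apply_le x i

theorem norm_e3 : ‖e3‖ = 1 := by simp [e3]

theorem vhat_eq_zero {Fh : E3 → Fin 3 → ℂ} {lam : ℝ} {ξ : E3}
    (h : Fh (ξ - lam • e3) = 0) : vhat Fh lam ξ = 0 := by
  simp [vhat, h]

theorem norm_vhat_le (Fh : E3 → Fin 3 → ℂ) (lam : ℝ) (ξ : E3) :
    ‖vhat Fh lam ξ‖ ≤ 2 * ‖Fh (ξ - lam • e3)‖ := by
  rcases eq_or_ne ξ 0 with rfl | hξ
  · simp [vhat]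
  have hcross :
      ‖(fun j => (ξ j : ℂ)) ⨯₃ Fh (ξ - lam • e3)‖ ≤ 2 * ‖ξ‖ * ‖Fh (ξ - lam • e3)‖ :=
    (norm_cross_le _ _).trans (by gcongr; exact norm_ofReal_comp_le ξ)
  rw [vhat, norm_smul, norm_mul, Complex.norm_I, one_mul, norm_inv, Complex.norm_real, norm_norm]
  calc ‖ξ‖⁻¹ * ‖_‖ ≤ ‖ξ‖⁻¹ * (2 * ‖ξ‖ * ‖Fh (ξ - lam • e3)‖) := by gcongr
    _ = 2 * ‖Fh (ξ - lam • e3)‖ := by field_simp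

theorem angle_le_arcsin_of_norm_sub_smul_le {V : Type*} [NormedAddCommGroup V]
    [InnerProductSpace ℝ V] {u x : V} {r lam : ℝ} (hu : ‖u‖ = 1) (hr : r < lam)
    (h : ‖x - lam • u‖ ≤ r) : angle x u ≤ Real.arcsin (r / lam) := by
  have hr0 : 0 ≤ r := (norm_nonneg _).trans h
  have hlam : 0 < lam := hr0.trans_lt hr
  set t := inner ℝ x u
  have hsq : ‖x‖ ^ 2 - 2 * lam * t + lam ^ 2 ≤ r ^ 2 := by
    have := pow_le_pow_left₀ (norm_nonneg _) h 2
    rw [norm_sub_sq_real, inner_smul_right, norm_smul, Real.norm_eq_abs, abs_of_pos hlam, hu,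
      mul_one] at this
    linarith
  have ht : 0 < t := by nlinarith
  have hx : 0 < ‖x‖ := by
    refine norm_pos_iff.2 fun hx0 => ?_
    simp [t, hx0] at ht
  -- completing the square: λ²t² - (λ² - r²)‖x‖² ≥ (λt - (λ² - r²))² ≥ 0
  have hcos : Real.sqrt (1 - (r / lam) ^ 2) ≤ t / ‖x‖ := by
    rw [Real.sqrt_le_left (by positivity), div_pow, div_pow, le_div_iff₀ (by positivity)]
    field_simp
    have hgap : 0 ≤ lam ^ 2 - r ^ 2 := by nlinarith
    nlinarith [sq_nonneg (lam * t - (lam ^ 2 - r ^ 2)), mul_le_mul_of_nonneg_left hsq hgap]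
  rw [angle, hu, mul_one, Real.arcsin_eq_arccos (by positivity)]
  exact Real.antitone_arccos hcos

section Support

variable {Fh : E3 → Fin 3 → ℂ}

theorem norm_sub_smul_e3_le_one_of_vhat_ne_zero (hsupp : ∀ ξ : E3, 1 < ‖ξ‖ → Fh ξ = 0)
    {lam : ℝ} {ξ : E3} (hv : vhat Fh lam ξ ≠ 0) : ‖ξ - lam • e3‖ ≤ 1 :=
  le_of_not_gt fun h => hv (vhat_eq_zero (hsupp _ h))

theorem norm_mul_norm_vhat_sq_le (hsupp : ∀ ξ : E3, 1 < ‖ξ‖ → Fh ξ = 0) {lam : ℝ}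
    (hlam : 1 ≤ lam) (ξ : E3) :
    ‖ξ‖ * ‖vhat Fh lam ξ‖ ^ 2 ≤ 8 * lam * ‖Fh (ξ - lam • e3)‖ ^ 2 := by
  by_cases hv : vhat Fh lam ξ = 0
  · rw [hv, norm_zero, zero_pow two_ne_zero, mul_zero]; positivity
  have hξ : ‖ξ‖ ≤ 2 * lam :=
    calc ‖ξ‖ ≤ ‖ξ - lam • e3‖ + ‖lam • e3‖ := norm_le_norm_sub_add ξ _
      _ ≤ 1 + lam := by
          gcongr
          · exact norm_sub_smul_e3_le_one_of_vhat_ne_zero hsupp hv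
          · rw [norm_smul, norm_e3, mul_one, Real.norm_of_nonneg (by linarith)]
      _ ≤ 2 * lam := by linarith
  calc ‖ξ‖ * ‖vhat Fh lam ξ‖ ^ 2 ≤ (2 * lam) * (2 * ‖Fh (ξ - lam • e3)‖) ^ 2 := by
        gcongr; exact norm_vhat_le Fh lam ξ
    _ = 8 * lam * ‖Fh (ξ - lam • e3)‖ ^ 2 := by ring

theorem integral_norm_mul_norm_vhat_sq_le (hsupp : ∀ ξ : E3, 1 < ‖ξ‖ → Fh ξ = 0)
    (hint : Integrable (fun ξ : E3 => ‖Fh ξ‖ ^ 2)) {lam : ℝ} (hlam : 1 ≤ lam) :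
    ∫ ξ : E3, ‖ξ‖ * ‖vhat Fh lam ξ‖ ^ 2 ≤ 8 * lam * ∫ ξ : E3, ‖Fh ξ‖ ^ 2 := by
  rw [← integral_sub_right_eq_self (fun ξ => ‖Fh ξ‖ ^ 2) (lam • e3), ← integral_const_mul]
  exact integral_mono_of_nonneg (ae_of_all _ fun ξ => by positivity)
    ((hint.comp_sub_right _).const_mul _) (ae_of_all _ (norm_mul_norm_vhat_sq_le hsupp hlam))

end Support

/-- if f̂ is supported in the closed unit ball and square integrable, then for
λ > 1 the Fourier support of v_λ lies in the cone {angle(ξ, e₃) ≤ arcsin(1/λ)} and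
‖v_λ‖_{Ḣ^{1/2}} ≤ C λ^{1/2} ‖f̂‖_{L²}. -/
theorem stmt_11 :
    ∃ C > (0 : ℝ), ∀ Fh : E3 → Fin 3 → ℂ, Measurable Fh →
      (∀ ξ : E3, 1 < ‖ξ‖ → Fh ξ = 0) →
      Integrable (fun ξ : E3 => ‖Fh ξ‖ ^ 2) →
      ∀ lam : ℝ, 1 < lam →
        (∀ ξ : E3, vhat Fh lam ξ ≠ 0 → angle ξ e3 ≤ Real.arcsin (1 / lam)) ∧
        Real.sqrt (∫ ξ : E3, ‖ξ‖ * ‖vhat Fh lam ξ‖ ^ 2) ≤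
          C * Real.sqrt lam * Real.sqrt (∫ ξ : E3, ‖Fh ξ‖ ^ 2) := by
  refine ⟨3, by norm_num, fun Fh _ hsupp hint lam hlam => ⟨fun ξ hv => ?_, ?_⟩⟩
  · exact angle_le_arcsin_of_norm_sub_smul_le norm_e3 hlam
      (norm_sub_smul_e3_le_one_of_vhat_ne_zero hsupp hv)
  have hM : 0 ≤ ∫ ξ : E3, ‖Fh ξ‖ ^ 2 := integral_nonneg fun ξ => by positivity
  calc Real.sqrt (∫ ξ : E3, ‖ξ‖ * ‖vhat Fh lam ξ‖ ^ 2)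
      ≤ Real.sqrt (9 * lam * ∫ ξ : E3, ‖Fh ξ‖ ^ 2) := by
        gcongr
        refine (integral_norm_mul_norm_vhat_sq_le hsupp hint hlam.le).trans ?_
        gcongr
        norm_num
    _ = 3 * Real.sqrt lam * Real.sqrt (∫ ξ : E3, ‖Fh ξ‖ ^ 2) := by
        rw [Real.sqrt_mul (by positivity), Real.sqrt_mul (by norm_num),
          show (9 : ℝ) = 3 ^ 2 by norm_num, Real.sqrt_sq (by norm_num)]
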